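/- Let G be a group, let g ≥ 6, and let a_1,…,a_{g−1}, y be elements of G satisfying: a_i a_j = a_j a_i for |i−j|>1; a_i a_{i+1} a_i = a_{i+1} a_i a_{i+1} for i=1,…,g−2; a_i y = y a_i for i=3,…,g−1; and a_1 y = y a_1^{−1}. Set M = a_1 a_2 ⋯ a_{g−1}, u_1 = a_1 y, and inductively u_{i+1} = M u_i^{−1} M^{−1}. Then u_4 = a_3 a_4 a_2 a_3 a_1 a_2 (a_1 y^{−1}) a_2^{−1} a_1^{−1} a_3^{−1} a_2^{−1} a_4^{−1} a_3^{−1} and u_5 = a_4 a_5 a_3 a_4 a_2 a_3 a_1 a_2 (a_1 y) a_2^{−1} a_1^{−1} a_3^{−1} a_2^{−1} a_4^{−1} a_3^{−1} a_5^{−1} a_4^{−1}. -/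

import Mathlib

/-!
Conjugation `φ = M · M⁻¹` shifts `aᵢ ↦ aᵢ₊₁` (braid relations) and sends `y ↦ c y c⁻¹` with
`c = a₁ a₂` (as `y` commutes with `a₃, …`). Together with `a₁ a₂ a₁ = a₂ a₁ a₂` and
`a₁ y = y a₁⁻¹` this gives `φ ((w a₁ z w⁻¹)⁻¹) = (φ(w) c) (a₁ z⁻¹) (φ(w) c)⁻¹` for `z = y^{±1}`,
so `uₖ = Wₖ (a₁ y^{±1}) Wₖ⁻¹` with `W₁ = 1`, `Wₖ₊₁ = φ(Wₖ) c`, and `W₄, W₅` are the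
conjugators in the statement.
-/

section

variable {G : Type*} [Group G]

theorem commute_prod_map_range' {x : G} {a : ℕ → G} {s k : ℕ}
    (h : ∀ j, s ≤ j → j < s + k → Commute x (a j)) :
    Commute x ((List.range' s k).map a).prod :=
  Commute.list_prod_right _ _ fun _ hz => by
    obtain ⟨j, hj, rfl⟩ := List.mem_map.1 hz
    exact h j (List.mem_range'_1.1 hj).1 (List.mem_range'_1.1 hj).2

theorem range'_one_eq_append_cons {i n : ℕ} (hi : 1 ≤ i) (hin : i + 1 ≤ n) :
    List.range' 1 n = List.range' 1 (i - 1) ++ i :: (i + 1) :: List.range' (i + 2) (n - i - 1) := by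
  obtain ⟨k, rfl⟩ : ∃ k, i = k + 1 := ⟨i - 1, by omega⟩
  obtain ⟨m, rfl⟩ : ∃ m, n = k + 2 + m := ⟨n - k - 2, by omega⟩
  rw [show k + 2 + m = k + (m + 1 + 1) by omega, ← List.range'_append, List.range'_succ,
    List.range'_succ]
  simp only [Nat.add_sub_cancel, one_mul]
  rw [show k + (m + 1 + 1) - (k + 1) - 1 = m by omega, Nat.add_comm 1 k]

theorem prod_map_range'_mul_of_braid {a : ℕ → G} {i n : ℕ} (hi : 1 ≤ i) (hin : i + 1 ≤ n)
    (hleft : ∀ j, 1 ≤ j → j < i → Commute (a (i + 1)) (a j))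
    (hright : ∀ j, i + 2 ≤ j → j ≤ n → Commute (a i) (a j))
    (hbraid : a i * a (i + 1) * a i = a (i + 1) * a i * a (i + 1)) :
    ((List.range' 1 n).map a).prod * a i = a (i + 1) * ((List.range' 1 n).map a).prod := by
  set A := ((List.range' 1 (i - 1)).map a).prod
  set B := ((List.range' (i + 2) (n - i - 1)).map a).prod
  have hA : Commute (a (i + 1)) A := commute_prod_map_range' fun j h1 h2 => hleft j h1 (by omega)
  have hB : Commute (a i) B := commute_prod_map_range' fun j h1 h2 => hright j h1 (by omega)
  have hM : ((List.range' 1 n).map a).prod = A * (a i * a (i + 1)) * B := by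
    rw [range'_one_eq_append_cons hi hin]
    simp [A, B, mul_assoc]
  calc ((List.range' 1 n).map a).prod * a i = A * (a i * a (i + 1) * a i) * B := by
        rw [hM, mul_assoc, ← hB.eq]; group
    _ = a (i + 1) * (A * (a i * a (i + 1)) * B) := by
        rw [hbraid]; simp only [← mul_assoc, hA.eq]
    _ = _ := by rw [hM]

theorem prod_map_range'_mul_of_commute {a : ℕ → G} {y : G} {n : ℕ} (hn : 2 ≤ n)
    (hy : ∀ j, 3 ≤ j → j ≤ n → Commute y (a j)) :
    ((List.range' 1 n).map a).prod * y =
      a 1 * a 2 * y * (a 1 * a 2)⁻¹ * ((List.range' 1 n).map a).prod := by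
  obtain ⟨m, rfl⟩ : ∃ m, n = m + 2 := ⟨n - 2, by omega⟩
  have hT : Commute y ((List.range' 3 m).map a).prod :=
    commute_prod_map_range' fun j h1 h2 => hy j h1 (by omega)
  simp only [List.range'_succ, List.map_cons, List.prod_cons]
  rw [mul_assoc, mul_assoc, ← hT.eq]
  group

theorem map_inv_conj_of_braid {F : Type*} [FunLike F G G] [MonoidHomClass F G G] (φ : F)
    {x x' z : G} (hφx : φ x = x') (hbraid : x * x' * x = x' * x * x') (hxz : x * z = z * x⁻¹)
    (hφz : φ z = x * x' * z * (x * x')⁻¹) (w : G) :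
    φ (w * (x * z) * w⁻¹)⁻¹ = φ w * (x * x') * (x * z⁻¹) * (φ w * (x * x'))⁻¹ := by
  have hxz' : z⁻¹ * x⁻¹ = x * z⁻¹ := by simpa using congrArg (·⁻¹) hxz
  calc φ (w * (x * z) * w⁻¹)⁻¹ = φ w * (x * x') * z⁻¹ * (x' * x * x')⁻¹ * (φ w)⁻¹ := by
        simp only [map_inv, map_mul, hφx, hφz]; group
    _ = φ w * (x * x') * (z⁻¹ * x⁻¹) * (x * x')⁻¹ * (φ w)⁻¹ := by rw [← hbraid]; group
    _ = _ := by rw [hxz']; group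

end

/-- computation of `u₄` and `u₅` from `u₁ = a₁ y` and the recursion
`u_{i+1} = M u_i⁻¹ M⁻¹`, where `M = a₁ a₂ ⋯ a_{g-1}`. -/
theorem stmt_7 {G : Type*} [Group G] (g : ℕ) (hg : 6 ≤ g) (a : ℕ → G) (y : G)
    (hA1 : ∀ i j, 1 ≤ i → j ≤ g - 1 → i + 1 < j → a i * a j = a j * a i)
    (hA2 : ∀ i, 1 ≤ i → i ≤ g - 2 → a i * a (i + 1) * a i = a (i + 1) * a i * a (i + 1))
    (hC1' : ∀ i, 3 ≤ i → i ≤ g - 1 → a i * y = y * a i)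
    (hC4' : a 1 * y = y * (a 1)⁻¹)
    (M : G) (u : ℕ → G)
    (hM : M = ((List.range' 1 (g - 1)).map a).prod)
    (hu1 : u 1 = a 1 * y)
    (hrec : ∀ i, 1 ≤ i → u (i + 1) = M * (u i)⁻¹ * M⁻¹) :
    u 4 = a 3 * a 4 * a 2 * a 3 * a 1 * a 2 * (a 1 * y⁻¹) *
        (a 2)⁻¹ * (a 1)⁻¹ * (a 3)⁻¹ * (a 2)⁻¹ * (a 4)⁻¹ * (a 3)⁻¹ ∧
    u 5 = a 4 * a 5 * a 3 * a 4 * a 2 * a 3 * a 1 * a 2 * (a 1 * y) *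
        (a 2)⁻¹ * (a 1)⁻¹ * (a 3)⁻¹ * (a 2)⁻¹ * (a 4)⁻¹ * (a 3)⁻¹ * (a 5)⁻¹ * (a 4)⁻¹ := by
  set φ := MulAut.conj M
  have hφa : ∀ i, 1 ≤ i → i ≤ 4 → φ (a i) = a (i + 1) := fun i hi hi4 => by
    rw [MulAut.conj_apply, mul_inv_eq_iff_eq_mul, hM]
    exact prod_map_range'_mul_of_braid hi (by omega)
      (fun j hj _ => (hA1 j (i + 1) hj (by omega) (by omega)).symm)
      (fun j hj hjg => hA1 i j hi hjg (by omega)) (hA2 i hi (by omega))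
  have hφ1 : φ (a 1) = a 2 := hφa 1 le_rfl (by norm_num)
  have hφ2 : φ (a 2) = a 3 := hφa 2 (by norm_num) (by norm_num)
  have hφ3 : φ (a 3) = a 4 := hφa 3 (by norm_num) (by norm_num)
  have hφ4 : φ (a 4) = a 5 := hφa 4 (by norm_num) le_rfl
  have hφy : φ y = a 1 * a 2 * y * (a 1 * a 2)⁻¹ := by
    rw [MulAut.conj_apply, mul_inv_eq_iff_eq_mul, hM]
    exact prod_map_range'_mul_of_commute (by omega) fun j hj hjg => (hC1' j hj hjg).symm
  have hbraid : a 1 * a 2 * a 1 = a 2 * a 1 * a 2 := hA2 1 le_rfl (by omega)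
  have hstep := map_inv_conj_of_braid φ hφ1 hbraid hC4' hφy
  have hstep' := map_inv_conj_of_braid φ hφ1 hbraid (z := y⁻¹)
    (by simpa using congrArg (·⁻¹) hC4'.symm) (by rw [map_inv, hφy]; group)
  have hu : ∀ i, 1 ≤ i → u (i + 1) = φ (u i)⁻¹ := fun i hi => by rw [hrec i hi, MulAut.conj_apply]
  have h1 : u 1 = 1 * (a 1 * y) * 1⁻¹ := by rw [hu1]; group
  have h2 : u 2 = a 1 * a 2 * (a 1 * y⁻¹) * (a 1 * a 2)⁻¹ := by
    rw [hu 1 le_rfl, h1, hstep, map_one, one_mul]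
  have h3 : u 3 = a 2 * a 3 * (a 1 * a 2) * (a 1 * y) * (a 2 * a 3 * (a 1 * a 2))⁻¹ := by
    rw [hu 2 (by norm_num), h2, hstep', inv_inv, map_mul, hφ1, hφ2]
  have h4 : u 4 = a 3 * a 4 * (a 2 * a 3) * (a 1 * a 2) * (a 1 * y⁻¹) *
      (a 3 * a 4 * (a 2 * a 3) * (a 1 * a 2))⁻¹ := by
    rw [hu 3 (by norm_num), h3, hstep]
    simp only [map_mul, hφ1, hφ2, hφ3]
  have h5 : u 5 = a 4 * a 5 * (a 3 * a 4) * (a 2 * a 3) * (a 1 * a 2) * (a 1 * y) *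
      (a 4 * a 5 * (a 3 * a 4) * (a 2 * a 3) * (a 1 * a 2))⁻¹ := by
    rw [hu 4 (by norm_num), h4, hstep', inv_inv]
    simp only [map_mul, hφ1, hφ2, hφ3, hφ4]
  constructor
  · rw [h4]; group
  · rw [h5]; group
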